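/- arXiv:2308.06381 — 3 statements merged into one kernel-verified Lean document; each statement's English description precedes it below -/
import Mathlib

section
/- With ν = ξ(ξ-ξ₁)ξ₁(5(ξ² - ξξ₁ + ξ₁²) + 3α) and α > 0, the two real numbers ν and (ξ₁η - ξη₁)²/(ξ(ξ-ξ₁)ξ₁) have the same sign (their product is nonnegative), and consequently 0 ≤ |ν| ≤ |p(ζ₁) + p(ζ-ζ₁) - p(ζ)| where p(ξ,η) = ξ⁵ + αξ³ - η²/ξ. -/
/-!
The resonance function of `p(ξ,η) = ξ⁵ + αξ³ - η²/ξ` splits as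
`p(ζ₁) + p(ζ-ζ₁) - p(ζ) = -(ν + (ξ₁η - ξη₁)²/(ξ(ξ-ξ₁)ξ₁))`, the dispersive part `ν` coming from
the factorisations `ξ₁ᵏ + (ξ-ξ₁)ᵏ - ξᵏ` for `k = 3, 5`. The product of the two summands is
`(5(ξ² - ξξ₁ + ξ₁²) + 3α)(ξ₁η - ξη₁)² ≥ 0`, so they have the same sign and no cancellation occurs.
-/

noncomputable def dispersionSymbol (α ξ η : ℝ) : ℝ :=
  ξ ^ 5 + α * ξ ^ 3 - η ^ 2 / ξ

lemma abs_le_abs_add_of_mul_nonneg {R : Type*} [CommRing R] [LinearOrder R] [IsStrictOrderedRing R]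
    {a b : R} (h : 0 ≤ a * b) : |a| ≤ |a + b| :=
  sq_le_sq.mp (by nlinarith [sq_nonneg b])

lemma resonance_factor_pos {α : ℝ} (hα : 0 < α) (ξ ξ₁ : ℝ) :
    0 < 5 * (ξ ^ 2 - ξ * ξ₁ + ξ₁ ^ 2) + 3 * α := by
  nlinarith [sq_nonneg (ξ - ξ₁), sq_nonneg ξ, sq_nonneg ξ₁]

lemma dispersionSymbol_resonance (α : ℝ) {ξ ξ₁ : ℝ} (η η₁ : ℝ)
    (hξ : ξ ≠ 0) (hξ₁ : ξ₁ ≠ 0) (hξξ₁ : ξ - ξ₁ ≠ 0) :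
    dispersionSymbol α ξ₁ η₁ + dispersionSymbol α (ξ - ξ₁) (η - η₁) - dispersionSymbol α ξ η =
      -(ξ * (ξ - ξ₁) * ξ₁ * (5 * (ξ ^ 2 - ξ * ξ₁ + ξ₁ ^ 2) + 3 * α)
        + (ξ₁ * η - ξ * η₁) ^ 2 / (ξ * (ξ - ξ₁) * ξ₁)) := by
  unfold dispersionSymbol
  field_simp
  ring

/-- With `ν = ξ(ξ-ξ₁)ξ₁(5(ξ² - ξξ₁ + ξ₁²) + 3α)` and `α > 0`, the numbers `ν` and
`(ξ₁η - ξη₁)²/(ξ(ξ-ξ₁)ξ₁)` have the same sign (their product is nonnegative), and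
consequently `0 ≤ |ν| ≤ |p(ζ₁) + p(ζ-ζ₁) - p(ζ)|` where `p(ξ,η) = ξ⁵ + αξ³ - η²/ξ`. -/
theorem stmt_2 (α : ℝ) (hα : 0 < α) (ξ ξ₁ η η₁ : ℝ)
    (hξ : ξ ≠ 0) (hξ₁ : ξ₁ ≠ 0) (hξξ₁ : ξ - ξ₁ ≠ 0) :
    0 ≤ (ξ * (ξ - ξ₁) * ξ₁ * (5 * (ξ^2 - ξ * ξ₁ + ξ₁^2) + 3 * α))
        * ((ξ₁ * η - ξ * η₁)^2 / (ξ * (ξ - ξ₁) * ξ₁)) ∧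
    0 ≤ |ξ * (ξ - ξ₁) * ξ₁ * (5 * (ξ^2 - ξ * ξ₁ + ξ₁^2) + 3 * α)| ∧
    |ξ * (ξ - ξ₁) * ξ₁ * (5 * (ξ^2 - ξ * ξ₁ + ξ₁^2) + 3 * α)| ≤
      |(ξ₁^5 + α * ξ₁^3 - η₁^2 / ξ₁)
        + ((ξ - ξ₁)^5 + α * (ξ - ξ₁)^3 - (η - η₁)^2 / (ξ - ξ₁))
        - (ξ^5 + α * ξ^3 - η^2 / ξ)| := by
  have hdenom : ξ * (ξ - ξ₁) * ξ₁ ≠ 0 := by positivity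
  have hsign : 0 ≤ (ξ * (ξ - ξ₁) * ξ₁ * (5 * (ξ^2 - ξ * ξ₁ + ξ₁^2) + 3 * α))
      * ((ξ₁ * η - ξ * η₁)^2 / (ξ * (ξ - ξ₁) * ξ₁)) := by
    rw [mul_right_comm, mul_div_cancel₀ _ hdenom]
    have := resonance_factor_pos hα ξ ξ₁
    positivity
  refine ⟨hsign, abs_nonneg _, ?_⟩
  have hres := dispersionSymbol_resonance α η η₁ hξ hξ₁ hξξ₁
  unfold dispersionSymbol at hres
  rw [hres, abs_neg]
  exact abs_le_abs_add_of_mul_nonneg hsign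
end

section
/- Suppose α > 0 and β = -1, and let λᵢ = τᵢ - ξᵢ⁵ - αξᵢ³ + ξᵢ^{-1}ηᵢ² for i = 1,2,3, where ξᵢ are nonzero reals. If (τ₁,ξ₁,η₁) + (τ₂,ξ₂,η₂) + (τ₃,ξ₃,η₃) = 0, then λ₁ + λ₂ + λ₃ = -3αξ₁ξ₂ξ₃ - 5ξ₁ξ₂ξ₃(ξ₁² + ξ₁ξ₂ + ξ₂²) - (ξ₂η₁ - η₂ξ₁)²/(ξ₁ξ₂ξ₃). -/
/-! When `ξ₁ + ξ₂ + ξ₃ = 0`, Newton's identities give `ξ₁³ + ξ₂³ + ξ₃³ = 3ξ₁ξ₂ξ₃` and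
`ξ₁⁵ + ξ₂⁵ + ξ₃⁵ = 5ξ₁ξ₂ξ₃(ξ₁² + ξ₁ξ₂ + ξ₂²)`, while over the common denominator `ξ₁ξ₂ξ₃`
the transverse terms `ηᵢ²/ξᵢ` collapse to a single square once `ξ₃` and `η₃` are eliminated.
The `τᵢ` cancel outright. -/

theorem sum_cubes_of_add_eq_zero {R : Type*} [CommRing R] {a b c : R} (h : a + b + c = 0) :
    a ^ 3 + b ^ 3 + c ^ 3 = 3 * a * b * c := by
  obtain rfl : c = -a - b := by linear_combination h
  ring

theorem sum_fifth_powers_of_add_eq_zero {R : Type*} [CommRing R] {a b c : R}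
    (h : a + b + c = 0) :
    a ^ 5 + b ^ 5 + c ^ 5 = 5 * a * b * c * (a ^ 2 + a * b + b ^ 2) := by
  obtain rfl : c = -a - b := by linear_combination h
  ring

theorem sq_div_add_sq_div_add_sq_div {K : Type*} [Field K] {a b c x y z : K}
    (ha : a ≠ 0) (hb : b ≠ 0) (hc : c ≠ 0) (habc : a + b + c = 0) (hxyz : x + y + z = 0) :
    x ^ 2 / a + y ^ 2 / b + z ^ 2 / c = -((b * x - y * a) ^ 2 / (a * b * c)) := by
  obtain rfl : c = -a - b := by linear_combination habc
  obtain rfl : z = -x - y := by linear_combination hxyz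
  field_simp
  ring

theorem stmt_3_general (α : ℝ) (τ₁ τ₂ τ₃ ξ₁ ξ₂ ξ₃ η₁ η₂ η₃ : ℝ)
    (hξ₁ : ξ₁ ≠ 0) (hξ₂ : ξ₂ ≠ 0) (hξ₃ : ξ₃ ≠ 0)
    (hτ : τ₁ + τ₂ + τ₃ = 0) (hξ : ξ₁ + ξ₂ + ξ₃ = 0) (hη : η₁ + η₂ + η₃ = 0) :
    (τ₁ - ξ₁^5 - α * ξ₁^3 + η₁^2 / ξ₁)
      + (τ₂ - ξ₂^5 - α * ξ₂^3 + η₂^2 / ξ₂)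
      + (τ₃ - ξ₃^5 - α * ξ₃^3 + η₃^2 / ξ₃)
    = -3 * α * ξ₁ * ξ₂ * ξ₃ - 5 * ξ₁ * ξ₂ * ξ₃ * (ξ₁^2 + ξ₁ * ξ₂ + ξ₂^2)
        - (ξ₂ * η₁ - η₂ * ξ₁)^2 / (ξ₁ * ξ₂ * ξ₃) := by
  have cubes := sum_cubes_of_add_eq_zero hξ
  have fifths := sum_fifth_powers_of_add_eq_zero hξ
  have transverse := sq_div_add_sq_div_add_sq_div hξ₁ hξ₂ hξ₃ hξ hη
  linear_combination hτ - fifths - α * cubes + transverse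

/-- Resonance identity for the fifth-order KP II equation (`α > 0`, `β = -1`):
if the three frequency vectors sum to zero, then with
`λᵢ = τᵢ - ξᵢ⁵ - αξᵢ³ + ξᵢ⁻¹ηᵢ²`,
`λ₁ + λ₂ + λ₃ = -3αξ₁ξ₂ξ₃ - 5ξ₁ξ₂ξ₃(ξ₁² + ξ₁ξ₂ + ξ₂²) - (ξ₂η₁ - η₂ξ₁)²/(ξ₁ξ₂ξ₃)`. -/
theorem stmt_3 (α : ℝ) (hα : 0 < α) (τ₁ τ₂ τ₃ ξ₁ ξ₂ ξ₃ η₁ η₂ η₃ : ℝ)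
    (hξ₁ : ξ₁ ≠ 0) (hξ₂ : ξ₂ ≠ 0) (hξ₃ : ξ₃ ≠ 0)
    (hτ : τ₁ + τ₂ + τ₃ = 0) (hξ : ξ₁ + ξ₂ + ξ₃ = 0) (hη : η₁ + η₂ + η₃ = 0) :
    (τ₁ - ξ₁^5 - α * ξ₁^3 + η₁^2 / ξ₁)
      + (τ₂ - ξ₂^5 - α * ξ₂^3 + η₂^2 / ξ₂)
      + (τ₃ - ξ₃^5 - α * ξ₃^3 + η₃^2 / ξ₃)
    = -3 * α * ξ₁ * ξ₂ * ξ₃ - 5 * ξ₁ * ξ₂ * ξ₃ * (ξ₁^2 + ξ₁ * ξ₂ + ξ₂^2)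
        - (ξ₂ * η₁ - η₂ * ξ₁)^2 / (ξ₁ * ξ₂ * ξ₃) :=
  stmt_3_general α τ₁ τ₂ τ₃ ξ₁ ξ₂ ξ₃ η₁ η₂ η₃ hξ₁ hξ₂ hξ₃ hτ hξ hη
end

section
/- For nonzero reals ξ, ξ₁ with |ξ| ≥ 4|ξ₁| and α > 0, the partial derivative ∂ν/∂ξ₁ of ν(ξ,ξ₁) = ξ(ξ-ξ₁)ξ₁(5(ξ²-ξξ₁+ξ₁²)+3α) satisfies |∂ν/∂ξ₁| ≥ c|ξ-ξ₁|⁴ when |ξ-ξ₁| ≥ 1 and |∂ν/∂ξ₁| ≥ c|ξ-ξ₁|² when |ξ-ξ₁| ≤ 1, for a constant c > 0 depending only on α. -/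
lemma resonance_deriv (α ξ ξ₁ : ℝ) :
    deriv (fun y : ℝ =>
        ξ * (ξ - y) * y * (5 * (ξ^2 - ξ * y + y^2) + 3 * α)) ξ₁
      = 5*ξ^4 - 20*ξ^3*ξ₁ + 30*ξ^2*ξ₁^2 - 20*ξ*ξ₁^3 + 3*α*ξ^2 - 6*α*ξ*ξ₁ := by
  have h1 : HasDerivAt (fun y : ℝ => ξ * (ξ - y) * y)
      (ξ * (-1) * ξ₁ + ξ * (ξ - ξ₁) * 1) ξ₁ :=
    (((hasDerivAt_id ξ₁).const_sub ξ).const_mul ξ).mul (hasDerivAt_id ξ₁)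
  have h2 : HasDerivAt (fun y : ℝ => 5 * (ξ^2 - ξ * y + y^2) + 3 * α)
      (5 * (-(ξ * 1) + 2 * ξ₁ ^ 1) + 0) ξ₁ := by
    have := ((((hasDerivAt_id ξ₁).const_mul ξ).const_sub (ξ^2)).add
      (hasDerivAt_pow 2 ξ₁)).const_mul (5 : ℝ)
    simpa using this.add_const (3 * α)
  have h : HasDerivAt (fun y : ℝ => ξ * (ξ - y) * y * (5 * (ξ^2 - ξ * y + y^2) + 3 * α)) _ ξ₁ :=
    h1.mul h2
  rw [h.deriv]; ring

/-- Derivative estimate on the resonance function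
`ν(ξ,ξ₁) = ξ(ξ-ξ₁)ξ₁(5(ξ²-ξξ₁+ξ₁²)+3α)`: for `|ξ| ≥ 4|ξ₁|` there is `c > 0`
depending only on `α` with `|∂ν/∂ξ₁| ≥ c|ξ-ξ₁|⁴` when `|ξ-ξ₁| ≥ 1` and
`|∂ν/∂ξ₁| ≥ c|ξ-ξ₁|²` when `|ξ-ξ₁| ≤ 1`. -/
theorem stmt_16 (α : ℝ) (hα : 0 < α) :
    ∃ c : ℝ, 0 < c ∧
      ∀ ξ ξ₁ : ℝ, ξ ≠ 0 → ξ₁ ≠ 0 → 4 * |ξ₁| ≤ |ξ| →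
        (1 ≤ |ξ - ξ₁| →
          c * |ξ - ξ₁| ^ 4 ≤
            |deriv (fun y : ℝ =>
              ξ * (ξ - y) * y * (5 * (ξ^2 - ξ * y + y^2) + 3 * α)) ξ₁|) ∧
        (|ξ - ξ₁| ≤ 1 →
          c * |ξ - ξ₁| ^ 2 ≤
            |deriv (fun y : ℝ =>
              ξ * (ξ - y) * y * (5 * (ξ^2 - ξ * y + y^2) + 3 * α)) ξ₁|) := by
  refine ⟨min (16/25) (24*α/25), lt_min (by norm_num) (by positivity), ?_⟩
  intro ξ ξ₁ hξ hξ₁ hab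
  rw [resonance_deriv]
  set D : ℝ := 5*ξ^4 - 20*ξ^3*ξ₁ + 30*ξ^2*ξ₁^2 - 20*ξ*ξ₁^3 + 3*α*ξ^2 - 6*α*ξ*ξ₁
  -- basic facts about products
  have habs : |ξ * ξ₁| ≤ ξ^2 / 4 := by
    rw [abs_mul]
    calc |ξ| * |ξ₁| ≤ |ξ| * (|ξ| / 4) := by
          apply mul_le_mul_of_nonneg_left (by linarith) (abs_nonneg ξ)
      _ = ξ^2 / 4 := by rw [← sq_abs]; ring
  have hbl : -(ξ^2/4) ≤ ξ * ξ₁ := neg_le_of_abs_le habs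
  have hbu : ξ * ξ₁ ≤ ξ^2/4 := le_of_abs_le habs
  -- quintic part lower bound
  have hq : 0 ≤ 20*ξ₁^2 - 25*ξ*ξ₁ + 55/4*ξ^2 := by nlinarith [sq_nonneg (8*ξ₁ - 5*ξ), sq_nonneg ξ, sq_nonneg ξ₁]
  have hP : 25/16 * ξ^4 ≤ 5*ξ^4 - 20*ξ^3*ξ₁ + 30*ξ^2*ξ₁^2 - 20*ξ*ξ₁^3 := by
    nlinarith [mul_nonneg (by linarith : (0:ℝ) ≤ ξ^2/4 - ξ*ξ₁) hq]
  -- alpha part lower bound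
  have hA : 3/2 * α * ξ^2 ≤ 3*α*ξ^2 - 6*α*ξ*ξ₁ := by nlinarith [hbu, hα.le, sq_nonneg ξ]
  have hD : 25/16 * ξ^4 + 3/2 * α * ξ^2 ≤ D := by simp only [D]; linarith
  have hDpos : 0 ≤ D := by
    have h0 : (0:ℝ) ≤ 25/16 * ξ^4 + 3/2 * α * ξ^2 := by positivity
    exact le_trans h0 hD
  rw [abs_of_nonneg hDpos]
  -- |ξ - ξ₁| ≤ 5/4 |ξ|
  have hs : |ξ - ξ₁| ≤ 5/4 * |ξ| := by
    calc |ξ - ξ₁| ≤ |ξ| + |ξ₁| := abs_sub _ _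
      _ ≤ 5/4 * |ξ| := by linarith
  have hsnn : 0 ≤ |ξ - ξ₁| := abs_nonneg _
  have hs2 : |ξ - ξ₁|^2 ≤ 25/16 * ξ^2 := by
    have := mul_self_le_mul_self hsnn hs
    rw [← sq_abs ξ]; nlinarith [sq_nonneg |ξ|]
  have hs4 : |ξ - ξ₁|^4 ≤ 625/256 * ξ^4 := by nlinarith [sq_nonneg (|ξ - ξ₁|^2), sq_nonneg (ξ^2), hs2]
  constructor
  · intro _
    have hc : min (16/25) (24*α/25) ≤ 16/25 := min_le_left _ _
    calc min (16/25) (24*α/25) * |ξ - ξ₁|^4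
        ≤ 16/25 * |ξ - ξ₁|^4 := by
          apply mul_le_mul_of_nonneg_right hc (by positivity)
      _ ≤ 16/25 * (625/256 * ξ^4) := by linarith
      _ = 25/16 * ξ^4 := by ring
      _ ≤ D := by
          have h0 : (0:ℝ) ≤ 3/2 * α * ξ^2 := by positivity
          linarith
  · intro _
    have hc : min (16/25) (24*α/25) ≤ 24*α/25 := min_le_right _ _
    calc min (16/25) (24*α/25) * |ξ - ξ₁|^2
        ≤ 24*α/25 * |ξ - ξ₁|^2 := by
          apply mul_le_mul_of_nonneg_right hc (by positivity)
      _ ≤ 24*α/25 * (25/16 * ξ^2) := by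
          apply mul_le_mul_of_nonneg_left hs2 (by positivity)
      _ = 3/2 * α * ξ^2 := by ring
      _ ≤ D := by
          have h0 : (0:ℝ) ≤ 25/16 * ξ^4 := by positivity
          linarith
end
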